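/- arXiv:1303.3135 — 5 statements merged into one kernel-verified Lean document; each statement's English description precedes it below -/
import Mathlib

section
/- For all r > 1, α > 0, and x ∈ ℝ, one has ∫_ℝ (1+|y|)^{-r} (1+α|x−y|)^{-r} dy ≤ C ( α^{-1}(1+|x|)^{-r} + (1+α|x|)^{-r} ), with a constant C depending only on r. -/
/-!
Split the line according to which of `|y|`, `|x - y|` is at least `|x| / 2`. Where `|x - y|` is,
the second factor is at most `2 ^ r (1 + α|x|)^{-r}`; otherwise the first is at most
`2 ^ r (1 + |x|)^{-r}`. So the integrand is dominated by
`2 ^ r ((1 + α|x|)^{-r} g(y) + (1 + |x|)^{-r} g(α(x - y)))` with `g t = (1 + |t|)^{-r}`,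
whose integral is `2 ^ r (∫ g) ((1 + α|x|)^{-r} + α⁻¹ (1 + |x|)^{-r})`; `g` is integrable
as `r > 1`.
-/

open MeasureTheory

lemma rpow_neg_le_two_rpow_mul_of_half_le {r s t : ℝ} (hr : 0 ≤ r) (hs : 0 < s)
    (hst : s / 2 ≤ t) : t ^ (-r) ≤ 2 ^ r * s ^ (-r) :=
  calc t ^ (-r) ≤ (s / 2) ^ (-r) :=
        Real.rpow_le_rpow_of_nonpos (by positivity) hst (by linarith)
    _ = 2 ^ r * s ^ (-r) := by
        rw [Real.div_rpow hs.le zero_le_two, Real.rpow_neg zero_le_two, div_inv_eq_mul, mul_comm]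

lemma rpow_neg_mul_rpow_neg_le {r a b A B : ℝ} (hr : 0 ≤ r) (ha : 0 < a) (hb : 0 < b)
    (hA : 0 < A) (hB : 0 < B) (h : A / 2 ≤ b ∨ B / 2 ≤ a) :
    a ^ (-r) * b ^ (-r) ≤ 2 ^ r * (A ^ (-r) * a ^ (-r) + B ^ (-r) * b ^ (-r)) := by
  have ha' : 0 ≤ a ^ (-r) := Real.rpow_nonneg ha.le _
  have hb' : 0 ≤ b ^ (-r) := Real.rpow_nonneg hb.le _
  have hA' : 0 ≤ A ^ (-r) := Real.rpow_nonneg hA.le _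
  have hB' : 0 ≤ B ^ (-r) := Real.rpow_nonneg hB.le _
  have h2 : 0 ≤ (2 : ℝ) ^ r := Real.rpow_nonneg zero_le_two _
  rcases h with h | h
  · have hb_le := rpow_neg_le_two_rpow_mul_of_half_le hr hA h
    nlinarith [mul_le_mul_of_nonneg_left hb_le ha', mul_nonneg h2 (mul_nonneg hB' hb')]
  · have ha_le := rpow_neg_le_two_rpow_mul_of_half_le hr hB h
    nlinarith [mul_le_mul_of_nonneg_right ha_le hb', mul_nonneg h2 (mul_nonneg hA' ha')]

lemma half_one_add_mul_abs_le_or {α : ℝ} (hα : 0 ≤ α) (x y : ℝ) :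
    (1 + α * |x|) / 2 ≤ 1 + α * |x - y| ∨ (1 + |x|) / 2 ≤ 1 + |y| := by
  rcases le_or_gt (|x| / 2) |x - y| with h | h
  · left
    nlinarith [mul_le_mul_of_nonneg_left h hα]
  · right
    linarith [abs_sub_abs_le_abs_sub x y]

lemma integrable_one_add_abs_rpow_neg {r : ℝ} (hr : 1 < r) :
    Integrable fun t : ℝ => (1 + |t|) ^ (-r) := by
  simpa only [Real.norm_eq_abs] using
    integrable_one_add_norm (E := ℝ) (μ := volume) (r := r) (by simpa using hr)

lemma integral_one_add_abs_rpow_neg_pos {r : ℝ} (hr : 1 < r) :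
    0 < ∫ t : ℝ, (1 + |t|) ^ (-r) :=
  integral_pos_of_integrable_nonneg_nonzero (x := 0)
    ((continuous_const.add continuous_abs).rpow_const fun t =>
      Or.inl (by positivity : (0 : ℝ) < 1 + |t|).ne')
    (integrable_one_add_abs_rpow_neg hr)
    (fun t => Real.rpow_nonneg (by positivity) _) (by simp)

section Dilation

variable {E : Type*} [NormedAddCommGroup E]

lemma MeasureTheory.Integrable.comp_mul_sub {f : ℝ → E} (hf : Integrable f) {α : ℝ}
    (hα : α ≠ 0) (x : ℝ) :
    Integrable fun y => f (α * (x - y)) :=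
  (hf.comp_mul_left' hα).comp_sub_left x

lemma integral_comp_mul_sub [NormedSpace ℝ E] (f : ℝ → E) (α x : ℝ) :
    ∫ y, f (α * (x - y)) = |α⁻¹| • ∫ y, f y := by
  rw [integral_sub_left_eq_self (fun t => f (α * t)), Measure.integral_comp_mul_left]

end Dilation

/-- The convolution-type estimate: for `r > 1` there is a constant `C` (depending only
on `r`) such that for all `α > 0` and `x ∈ ℝ`,
`∫_ℝ (1+|y|)^{-r} (1+α|x−y|)^{-r} dy ≤ C (α⁻¹(1+|x|)^{-r} + (1+α|x|)^{-r})`. -/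
theorem convolution_decay_estimate (r : ℝ) (hr : 1 < r) :
    ∃ C > 0, ∀ α : ℝ, 0 < α → ∀ x : ℝ,
      ∫⁻ y : ℝ, ENNReal.ofReal ((1 + |y|) ^ (-r) * (1 + α * |x - y|) ^ (-r))
        ≤ ENNReal.ofReal (C * (α⁻¹ * (1 + |x|) ^ (-r) + (1 + α * |x|) ^ (-r))) := by
  set g : ℝ → ℝ := fun t => (1 + |t|) ^ (-r)
  have hg : Integrable g := integrable_one_add_abs_rpow_neg hr
  refine ⟨2 ^ r * ∫ t, g t,
    mul_pos (by positivity) (integral_one_add_abs_rpow_neg_pos hr), fun α hα x => ?_⟩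
  have hdil : ∀ y, (1 + α * |x - y|) ^ (-r) = g (α * (x - y)) := fun y => by
    simp only [g, abs_mul, abs_of_pos hα]
  set A := (1 + α * |x|) ^ (-r)
  set B := (1 + |x|) ^ (-r)
  set F : ℝ → ℝ := fun y => 2 ^ r * (A * g y + B * g (α * (x - y)))
  have hF_int : Integrable F :=
    ((hg.const_mul A).add ((hg.comp_mul_sub hα.ne' x).const_mul B)).const_mul _
  have hF_nonneg : ∀ y, 0 ≤ F y := fun y => by positivity
  calc ∫⁻ y, ENNReal.ofReal ((1 + |y|) ^ (-r) * (1 + α * |x - y|) ^ (-r))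
      ≤ ∫⁻ y, ENNReal.ofReal (F y) := lintegral_mono fun y => ENNReal.ofReal_le_ofReal <| by
        have h := rpow_neg_mul_rpow_neg_le (r := r) (by linarith) (by positivity) (by positivity)
          (by positivity) (by positivity) (half_one_add_mul_abs_le_or hα.le x y)
        rw [hdil] at h ⊢
        exact h
    _ = ENNReal.ofReal (∫ y, F y) :=
        (ofReal_integral_eq_lintegral_ofReal hF_int (ae_of_all _ hF_nonneg)).symm
    _ = _ := by
        rw [integral_const_mul, integral_add (hg.const_mul A)
          ((hg.comp_mul_sub hα.ne' x).const_mul B), integral_const_mul, integral_const_mul,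
          integral_comp_mul_sub, smul_eq_mul, abs_of_pos (inv_pos.mpr hα)]
        congr 1
        ring
end

section
/- Let A(ξ) = min(|ξ|, 1/(1+|ξ|)) on ℝ^d and ℓ > d a positive integer. Then there is a constant C > 0 such that for every r > 0, ∫_{ℝ^d} A(ξ)^ℓ A(rξ)^ℓ dξ ≤ C · min(r^{ℓ−d}, r^{d−ℓ}). -/
open MeasureTheory Module
open scoped ENNReal

/-! The weight `A` is at most `|ξ|` and at most `1/(1+|ξ|)`, whence the pointwise bound
`A(ξ) A(rξ) ≤ 4 / (r (1+|ξ|)²)`. Raised to the power `ℓ` it is integrable because `2ℓ > d`, so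
`Φ(r) := ∫ A(ξ)^ℓ A(rξ)^ℓ dξ ≤ C r^(-ℓ)`. The substitution `ξ ↦ r⁻¹ ξ` gives
`Φ(r) = r^(-d) Φ(1/r) ≤ C r^(ℓ-d)`, and `min(r^(ℓ-d), r^(-ℓ)) ≤ min(r^(ℓ-d), r^(d-ℓ))` as `ℓ ≥ d`. -/

theorem lintegral_comp_smul {E : Type*} [NormedAddCommGroup E] [NormedSpace ℝ E]
    [FiniteDimensional ℝ E] [MeasurableSpace E] [BorelSpace E] (μ : Measure E)
    [μ.IsAddHaarMeasure] (f : E → ℝ≥0∞) {c : ℝ} (hc : c ≠ 0) :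
    ∫⁻ x, f (c • x) ∂μ = ENNReal.ofReal |c ^ finrank ℝ E|⁻¹ * ∫⁻ x, f x ∂μ := by
  calc ∫⁻ x, f (c • x) ∂μ = ∫⁻ x, f x ∂(μ.map (c • ·)) :=
        lintegral_map_equiv f (Homeomorph.smulOfNeZero c hc).toMeasurableEquiv |>.symm
    _ = _ := by rw [Measure.map_addHaar_smul μ hc, lintegral_smul_measure, smul_eq_mul, abs_inv]

theorem lintegral_one_add_norm_rpow_neg_pos {E : Type*} [NormedAddCommGroup E]
    [MeasurableSpace E] [BorelSpace E] (μ : Measure E) [NeZero μ] (p : ℝ) :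
    0 < ∫⁻ x, ENNReal.ofReal ((1 + ‖x‖) ^ (-p)) ∂μ := by
  rw [lintegral_pos_iff_support (by fun_prop)]
  have hsupp : Function.support (fun x : E ↦ ENNReal.ofReal ((1 + ‖x‖) ^ (-p))) = Set.univ :=
    Function.support_eq_univ fun x ↦ by positivity
  rw [hsupp, Measure.measure_univ_pos]
  exact NeZero.ne μ

theorem min_rpow_sub_rpow_neg_le {r a b : ℝ} (hr : 0 < r) (ha : 0 ≤ a) (hab : a ≤ b) :
    min (r ^ (b - a)) (r ^ (-b)) ≤ min (r ^ (b - a)) (r ^ (a - b)) := by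
  refine le_min (min_le_left _ _) ?_
  rcases le_total r 1 with h | h
  · exact (min_le_left _ _).trans (Real.rpow_le_rpow_of_exponent_ge hr h (by linarith))
  · exact (min_le_right _ _).trans (Real.rpow_le_rpow_of_exponent_le h (by linarith))

namespace Similitude

variable {E : Type*} [NormedAddCommGroup E]

noncomputable def weight (ξ : E) : ℝ := min ‖ξ‖ (1 / (1 + ‖ξ‖))

lemma weight_nonneg (ξ : E) : 0 ≤ weight ξ :=
  le_min (norm_nonneg _) (by positivity)

lemma weight_le_norm (ξ : E) : weight ξ ≤ ‖ξ‖ := min_le_left _ _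

lemma weight_mul_one_add_norm_le_one (ξ : E) : weight ξ * (1 + ‖ξ‖) ≤ 1 :=
  (le_div_iff₀ (by positivity)).1 (min_le_right _ _)

variable [NormedSpace ℝ E]

lemma weight_mul_weight_smul_le {r : ℝ} (hr : 0 < r) (x : E) :
    weight x * weight (r • x) ≤ 4 / (r * (1 + ‖x‖) ^ 2) := by
  have hb := weight_mul_one_add_norm_le_one (r • x)
  rw [norm_smul, Real.norm_of_nonneg hr.le] at hb
  set t := ‖x‖
  set u := weight (r • x) * r
  have hu : 0 ≤ u := mul_nonneg (weight_nonneg _) hr.le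
  have hut : u * t ≤ 1 := by nlinarith [weight_nonneg (r • x)]
  have ha := weight_nonneg x
  rw [le_div_iff₀ (by positivity), show weight x * weight (r • x) * (r * (1 + t) ^ 2)
    = weight x * u * (1 + t) ^ 2 by ring]
  have ht₀ : 0 ≤ t := norm_nonneg x
  rcases le_total t 1 with ht | ht
  · have h₁ : weight x * u ≤ 1 := by nlinarith [weight_le_norm x]
    have h₂ : (1 + t) ^ 2 ≤ 4 := by nlinarith
    linarith [mul_le_mul h₁ h₂ (by positivity) zero_le_one]
  · have h₁ : weight x * (1 + t) ≤ 1 := weight_mul_one_add_norm_le_one x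
    have h₂ : u * (1 + t) ≤ 2 := by nlinarith
    calc weight x * u * (1 + t) ^ 2 = (weight x * (1 + t)) * (u * (1 + t)) := by ring
      _ ≤ 1 * 2 := mul_le_mul h₁ h₂ (by positivity) zero_le_one
      _ ≤ 4 := by norm_num

variable [MeasurableSpace E] [BorelSpace E] (μ : Measure E)

noncomputable def phi (ℓ : ℕ) (r : ℝ) : ℝ≥0∞ :=
  ∫⁻ ξ, ENNReal.ofReal (weight ξ ^ ℓ * weight (r • ξ) ^ ℓ) ∂μ

theorem phi_le (ℓ : ℕ) {r : ℝ} (hr : 0 < r) :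
    phi μ ℓ r ≤ ENNReal.ofReal ((4 / r) ^ ℓ) *
      ∫⁻ x, ENNReal.ofReal ((1 + ‖x‖) ^ (-(2 * ℓ : ℝ))) ∂μ := by
  rw [← lintegral_const_mul _ (by fun_prop)]
  refine lintegral_mono fun x ↦ ?_
  rw [← ENNReal.ofReal_mul (by positivity)]
  refine ENNReal.ofReal_le_ofReal ?_
  calc weight x ^ ℓ * weight (r • x) ^ ℓ = (weight x * weight (r • x)) ^ ℓ := (mul_pow ..).symm
    _ ≤ (4 / (r * (1 + ‖x‖) ^ 2)) ^ ℓ := by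
      gcongr
      · exact mul_nonneg (weight_nonneg _) (weight_nonneg _)
      · exact weight_mul_weight_smul_le hr x
    _ = (4 / r) ^ ℓ * (1 + ‖x‖) ^ (-(2 * ℓ : ℝ)) := by
      rw [show (2 * ℓ : ℝ) = ((2 * ℓ : ℕ) : ℝ) by push_cast; rfl, Real.rpow_neg (by positivity),
        Real.rpow_natCast, pow_mul, ← inv_pow, ← mul_pow, ← div_eq_mul_inv, div_div]

variable [FiniteDimensional ℝ E] [μ.IsAddHaarMeasure]

theorem phi_eq_inv_pow_mul_phi_inv (ℓ : ℕ) {r : ℝ} (hr : 0 < r) :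
    phi μ ℓ r = ENNReal.ofReal (r ^ finrank ℝ E)⁻¹ * phi μ ℓ r⁻¹ := by
  rw [← abs_of_pos (pow_pos hr _), phi, phi, ← lintegral_comp_smul μ _ hr.ne']
  simp only [inv_smul_smul₀ hr.ne', mul_comm]

theorem exists_phi_le {ℓ : ℕ} (hℓ : finrank ℝ E < 2 * ℓ) :
    ∃ C > 0, ∀ r : ℝ, 0 < r →
      phi μ ℓ r ≤ ENNReal.ofReal (C * min (r ^ ((ℓ : ℝ) - finrank ℝ E)) (r ^ (-(ℓ : ℝ)))) := by
  set J := ∫⁻ x, ENNReal.ofReal ((1 + ‖x‖) ^ (-(2 * ℓ : ℝ))) ∂μ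
  have hJ : J ≠ ∞ := (finite_integral_one_add_norm (by exact_mod_cast hℓ)).ne
  have hJ₀ : 0 < J.toReal := ENNReal.toReal_pos (lintegral_one_add_norm_rpow_neg_pos μ _).ne' hJ
  have hJ_eq (a : ℝ) (ha : 0 ≤ a) : ENNReal.ofReal a * J = ENNReal.ofReal (a * J.toReal) := by
    rw [ENNReal.ofReal_mul ha, ENNReal.ofReal_toReal hJ]
  refine ⟨4 ^ ℓ * J.toReal, by positivity, fun r hr ↦ ?_⟩
  rw [mul_min_of_nonneg _ _ (by positivity), ENNReal.ofReal_min]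
  refine le_min ?_ ?_
  · calc phi μ ℓ r = ENNReal.ofReal (r ^ finrank ℝ E)⁻¹ * phi μ ℓ r⁻¹ :=
          phi_eq_inv_pow_mul_phi_inv μ ℓ hr
      _ ≤ ENNReal.ofReal (r ^ finrank ℝ E)⁻¹ * (ENNReal.ofReal ((4 / r⁻¹) ^ ℓ) * J) :=
          mul_le_mul_right (phi_le μ ℓ (inv_pos.2 hr)) _
      _ = _ := by
          rw [hJ_eq _ (by positivity), ← ENNReal.ofReal_mul (by positivity),
            Real.rpow_sub hr, Real.rpow_natCast, Real.rpow_natCast, div_inv_eq_mul, mul_pow]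
          ring_nf
  · calc phi μ ℓ r ≤ ENNReal.ofReal ((4 / r) ^ ℓ) * J := phi_le μ ℓ hr
      _ = _ := by
          rw [hJ_eq _ (by positivity), Real.rpow_neg hr.le, Real.rpow_natCast, div_pow,
            div_eq_mul_inv]
          ring_nf

end Similitude

/-- For `A(ξ) = min(|ξ|, 1/(1+|ξ|))` on `ℝ^d` and an integer `ℓ > d`, there is `C > 0`
with `∫_{ℝ^d} A(ξ)^ℓ A(rξ)^ℓ dξ ≤ C min(r^{ℓ−d}, r^{d−ℓ})` for all `r > 0`. -/
theorem similitude_Phi_estimate (d ℓ : ℕ) (hℓ : d < ℓ) :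
    ∃ C > 0, ∀ r : ℝ, 0 < r →
      ∫⁻ ξ : EuclideanSpace ℝ (Fin d),
          ENNReal.ofReal ((min ‖ξ‖ (1 / (1 + ‖ξ‖))) ^ ℓ *
            (min ‖r • ξ‖ (1 / (1 + ‖r • ξ‖))) ^ ℓ)
        ≤ ENNReal.ofReal (C * min (r ^ ((ℓ : ℝ) - d)) (r ^ ((d : ℝ) - ℓ))) := by
  obtain ⟨C, hC, hphi⟩ := Similitude.exists_phi_le (volume : Measure (EuclideanSpace ℝ (Fin d)))
    (ℓ := ℓ) (by rw [finrank_euclideanSpace_fin]; omega)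
  refine ⟨C, hC, fun r hr ↦ (hphi r hr).trans (ENNReal.ofReal_le_ofReal ?_)⟩
  rw [finrank_euclideanSpace_fin]
  exact mul_le_mul_of_nonneg_left
    (min_rpow_sub_rpow_neg_le hr (Nat.cast_nonneg d) (by exact_mod_cast hℓ.le)) hC.le
end

section
/- Let O₁ ⊆ ℝ^{d₁}, O₂ ⊆ ℝ^{d₂} be open sets with nonempty complements, and let O = O₁ × O₂ ⊆ ℝ^{d₁+d₂}. Then for ξ = (ξ₁,ξ₂) ∈ O one has A(ξ)² ≤ A₁(ξ₁)·A₂(ξ₂), where A, A₁, A₂ are the auxiliary functions associated to O, O₁, O₂ respectively. -/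
/-!
Freezing one coordinate of `ξ = (ξ₁, ξ₂)` is an isometric embedding of the factor into the
product which carries `O₁ᶜ` into `(O₁ × O₂)ᶜ`, so `dist(ξ, Oᶜ) ≤ dist(ξⱼ, Oⱼᶜ)`. Together with
`|ξ|² = |ξ₁|² + |ξ₂|²` this makes both the numerator and the denominator of `A(ξ)` compare
favourably with those of `Aⱼ(ξⱼ)`, whence `A(ξ) ≤ Aⱼ(ξⱼ)` for `j = 1, 2`; multiply.
-/

open Metric

/-- The auxiliary function associated to a subset `O` of a normed space. -/
noncomputable def auxA {E : Type*} [NormedAddCommGroup E] (O : Set E) (ξ : E) : ℝ :=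
  min (infDist ξ Oᶜ / (1 + Real.sqrt (‖ξ‖ ^ 2 - infDist ξ Oᶜ ^ 2)))
    (1 / (1 + ‖ξ‖))

open WithLp
open scoped ENNReal

lemma auxA_nonneg {E : Type*} [NormedAddCommGroup E] (O : Set E) (ξ : E) : 0 ≤ auxA O ξ :=
  le_min (div_nonneg infDist_nonneg (by positivity)) (by positivity)

lemma auxA_le_auxA {E F : Type*} [NormedAddCommGroup E] [NormedAddCommGroup F]
    {O : Set E} {P : Set F} {ξ : E} {η : F}
    (hd : infDist ξ Oᶜ ≤ infDist η Pᶜ) (hn : ‖η‖ ≤ ‖ξ‖)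
    (hsq : ‖η‖ ^ 2 - infDist η Pᶜ ^ 2 ≤ ‖ξ‖ ^ 2 - infDist ξ Oᶜ ^ 2) :
    auxA O ξ ≤ auxA P η :=
  min_le_min
    (div_le_div₀ infDist_nonneg hd (by positivity) (by gcongr))
    (one_div_le_one_div_of_le (by positivity) (by linarith))

lemma Metric.infDist_le_infDist_of_isometry_of_mapsTo {X Y : Type*} [PseudoMetricSpace X]
    [PseudoMetricSpace Y] {f : X → Y} (hf : Isometry f) {s : Set X} {t : Set Y}
    (hs : s.Nonempty) (hst : Set.MapsTo f s t) (x : X) :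
    infDist (f x) t ≤ infDist x s :=
  calc infDist (f x) t ≤ infDist (f x) (f '' s) :=
        infDist_le_infDist_of_subset hst.image_subset (hs.image f)
    _ = infDist x s := infDist_image hf

section Lp

variable {p : ℝ≥0∞} [Fact (1 ≤ p)] {E F : Type*} [SeminormedAddCommGroup E]
  [SeminormedAddCommGroup F]

lemma WithLp.isometry_toLp_mk_left (y : F) : Isometry fun x : E ↦ toLp p (x, y) :=
  Isometry.of_dist_eq fun x₁ x₂ ↦ by
    rw [dist_eq_norm, dist_eq_norm, ← toLp_sub, Prod.mk_sub_mk, sub_self, norm_toLp_fst]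

lemma WithLp.isometry_toLp_mk_right (x : E) : Isometry fun y : F ↦ toLp p (x, y) :=
  Isometry.of_dist_eq fun y₁ y₂ ↦ by
    rw [dist_eq_norm, dist_eq_norm, ← toLp_sub, Prod.mk_sub_mk, sub_self, norm_toLp_snd]

lemma WithLp.infDist_compl_image_prod_le_left {O₁ : Set E} {O₂ : Set F} (h : O₁ᶜ.Nonempty)
    (x : E) (y : F) :
    infDist (toLp p (x, y)) (toLp p '' O₁ ×ˢ O₂)ᶜ ≤ infDist x O₁ᶜ := by
  refine infDist_le_infDist_of_isometry_of_mapsTo (f := fun x' : E ↦ toLp p (x', y))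
    (isometry_toLp_mk_left y) h ?_ x
  intro _ hout hmem
  exact hout ((toLp_injective p).mem_set_image.mp hmem).1

lemma WithLp.infDist_compl_image_prod_le_right {O₁ : Set E} {O₂ : Set F} (h : O₂ᶜ.Nonempty)
    (x : E) (y : F) :
    infDist (toLp p (x, y)) (toLp p '' O₁ ×ˢ O₂)ᶜ ≤ infDist y O₂ᶜ := by
  refine infDist_le_infDist_of_isometry_of_mapsTo (f := fun y' : F ↦ toLp p (x, y'))
    (isometry_toLp_mk_right x) h ?_ y
  intro _ hout hmem
  exact hout ((toLp_injective p).mem_set_image.mp hmem).2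

end Lp

section L2

variable {E F : Type*} [NormedAddCommGroup E] [NormedAddCommGroup F]

lemma auxA_image_prod_le_left {O₁ : Set E} (O₂ : Set F) (h : O₁ᶜ.Nonempty) (x : E) (y : F) :
    auxA (toLp 2 '' O₁ ×ˢ O₂) (toLp 2 (x, y)) ≤ auxA O₁ x := by
  have hd := infDist_compl_image_prod_le_left (O₂ := O₂) (p := 2) h x y
  have hd2 := pow_le_pow_left₀ infDist_nonneg hd 2
  have hnorm : ‖toLp 2 (x, y)‖ ^ 2 = ‖x‖ ^ 2 + ‖y‖ ^ 2 := prod_norm_sq_eq_of_L2 _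
  refine auxA_le_auxA hd (WithLp.norm_fst_le E (toLp 2 (x, y))) ?_
  linarith [sq_nonneg ‖y‖]

lemma auxA_image_prod_le_right (O₁ : Set E) {O₂ : Set F} (h : O₂ᶜ.Nonempty) (x : E) (y : F) :
    auxA (toLp 2 '' O₁ ×ˢ O₂) (toLp 2 (x, y)) ≤ auxA O₂ y := by
  have hd := infDist_compl_image_prod_le_right (O₁ := O₁) (p := 2) h x y
  have hd2 := pow_le_pow_left₀ infDist_nonneg hd 2
  have hnorm : ‖toLp 2 (x, y)‖ ^ 2 = ‖x‖ ^ 2 + ‖y‖ ^ 2 := prod_norm_sq_eq_of_L2 _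
  refine auxA_le_auxA hd (WithLp.norm_snd_le E (toLp 2 (x, y))) ?_
  linarith [sq_nonneg ‖x‖]

end L2

theorem auxA_product_estimate_general (d₁ d₂ : ℕ)
    (O₁ : Set (EuclideanSpace ℝ (Fin d₁))) (O₂ : Set (EuclideanSpace ℝ (Fin d₂)))
    (h01 : (0 : EuclideanSpace ℝ (Fin d₁)) ∈ O₁ᶜ)
    (h02 : (0 : EuclideanSpace ℝ (Fin d₂)) ∈ O₂ᶜ)
    (ξ₁ : EuclideanSpace ℝ (Fin d₁))
    (ξ₂ : EuclideanSpace ℝ (Fin d₂)) :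
    auxA ((WithLp.equiv 2 (EuclideanSpace ℝ (Fin d₁) × EuclideanSpace ℝ (Fin d₂))).symm ''
        (O₁ ×ˢ O₂))
      ((WithLp.equiv 2 (EuclideanSpace ℝ (Fin d₁) × EuclideanSpace ℝ (Fin d₂))).symm
        (ξ₁, ξ₂)) ^ 2
      ≤ auxA O₁ ξ₁ * auxA O₂ ξ₂ := by
  have h₁ := auxA_image_prod_le_left O₂ ⟨0, h01⟩ ξ₁ ξ₂
  have h₂ := auxA_image_prod_le_right O₁ ⟨0, h02⟩ ξ₁ ξ₂
  have h₀ := auxA_nonneg (toLp 2 '' O₁ ×ˢ O₂) (toLp 2 (ξ₁, ξ₂))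
  rw [sq]
  exact mul_le_mul h₁ h₂ h₀ (h₀.trans h₁)

/-- For open sets `O₁ ⊆ ℝ^{d₁}`, `O₂ ⊆ ℝ^{d₂}` with `0` in their complements, and
`O = O₁ × O₂ ⊆ ℝ^{d₁+d₂}` (euclidean product), one has `A(ξ₁,ξ₂)² ≤ A₁(ξ₁)·A₂(ξ₂)`. -/
theorem auxA_product_estimate (d₁ d₂ : ℕ)
    (O₁ : Set (EuclideanSpace ℝ (Fin d₁))) (O₂ : Set (EuclideanSpace ℝ (Fin d₂)))
    (hO₁ : IsOpen O₁) (hO₂ : IsOpen O₂)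
    (h01 : (0 : EuclideanSpace ℝ (Fin d₁)) ∈ O₁ᶜ)
    (h02 : (0 : EuclideanSpace ℝ (Fin d₂)) ∈ O₂ᶜ)
    (ξ₁ : EuclideanSpace ℝ (Fin d₁)) (hξ₁ : ξ₁ ∈ O₁)
    (ξ₂ : EuclideanSpace ℝ (Fin d₂)) (hξ₂ : ξ₂ ∈ O₂) :
    auxA ((WithLp.equiv 2 (EuclideanSpace ℝ (Fin d₁) × EuclideanSpace ℝ (Fin d₂))).symm ''
        (O₁ ×ˢ O₂))
      ((WithLp.equiv 2 (EuclideanSpace ℝ (Fin d₁) × EuclideanSpace ℝ (Fin d₂))).symm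
        (ξ₁, ξ₂)) ^ 2
      ≤ auxA O₁ ξ₁ * auxA O₂ ξ₂ :=
  auxA_product_estimate_general d₁ d₂ O₁ O₂ h01 h02 ξ₁ ξ₂
end

section
/- Let c ∈ ℝ and t, r₁, r₂ ≥ 1 be integers with r₂ > 1 and t ≥ 3r₁ + (3+6|c|)r₂ + 6|c| + 2. Then there is a constant C > 0 such that for every a ≠ 0 and b ∈ ℝ, ∫_{ℝ²} A(ξ)^t A(hᵀξ)^t dξ ≤ C (|a|+|a|^{-1})^{-r₁} (1+|b|)^{-r₂}, where h = [[a,b],[0,a^c]] and A(ξ) = min(|ξ₁|/(1+|ξ₂|), 1/(1+|ξ|)). -/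
open MeasureTheory

/-- The auxiliary function of the shearlet dual orbit:
`A(ξ) = min(|ξ₁|/(1+|ξ₂|), 1/(1+|ξ|))` on `ℝ²`. -/
noncomputable def shearA (ξ : Fin 2 → ℝ) : ℝ :=
  min (|ξ 0| / (1 + |ξ 1|)) (1 / (1 + Real.sqrt (ξ 0 ^ 2 + ξ 1 ^ 2)))

/-!
Write `p(ξ) = A(ξ) A(hᵀξ)`. There are three pointwise bounds:
`p · (|a| + |a|⁻¹) ≤ 2`, from `A(ξ) ≤ |ξ₁|` and `A(ξ) ≤ (1 + |ξ₁|)⁻¹` applied to `ξ` and to `hᵀξ`,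
whose first coordinate is `aξ₁`; `p · (1 + |b|) ≤ 3 (|a| + |a|⁻¹)^(1+|c|)`, because either
`|bξ₁| ≤ 2|a|^c |ξ₂|`, or `|bξ₁|` is at most twice the second coordinate of `hᵀξ`; and
`p · (1 + ‖ξ‖) ≤ 1`. Splitting `t = (r₁ + (1+|c|) r₂) + r₂ + s` and raising the three bounds to these
powers gives `p^t ≲ (|a| + |a|⁻¹)^(-r₁) (1 + |b|)^(-r₂) (1 + ‖ξ‖)^(-s)`, and the hypothesis on `t`
makes `s > 2`, so the last factor is integrable on `ℝ²`.
-/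

lemma one_le_add_inv {x : ℝ} (hx : 0 < x) : 1 ≤ x + x⁻¹ := by
  rcases le_total 1 x with h | h
  · linarith [inv_pos.2 hx]
  · linarith [(one_le_inv₀ hx).2 h]

lemma Real.rpow_le_add_inv_rpow_abs {x : ℝ} (hx : 0 < x) (c : ℝ) : x ^ c ≤ (x + x⁻¹) ^ |c| := by
  rcases le_total 0 c with hc | hc
  · rw [abs_of_nonneg hc]
    exact Real.rpow_le_rpow hx.le (le_add_of_nonneg_right (inv_pos.2 hx).le) hc
  · rw [abs_of_nonpos hc, ← neg_neg c, Real.rpow_neg hx.le, ← Real.inv_rpow hx.le, neg_neg]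
    exact Real.rpow_le_rpow (inv_pos.2 hx).le (le_add_of_nonneg_left hx.le) (by linarith)

lemma Real.rpow_le_of_mul_le {p X Y W K L γ r₁ r₂ s : ℝ} (hp : 0 ≤ p) (hX : 0 < X) (hY : 0 < Y)
    (hW : 0 < W) (hpX : p * X ≤ K) (hpY : p * Y ≤ L * X ^ γ) (hpW : p * W ≤ 1)
    (hr₁ : 0 ≤ r₁) (hγ : 0 ≤ γ) (hr₂ : 0 ≤ r₂) (hs : 0 < s) :
    p ^ (r₁ + γ * r₂ + r₂ + s) ≤ K ^ (r₁ + γ * r₂) * L ^ r₂ * X ^ (-r₁) * Y ^ (-r₂) * W ^ (-s) := by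
  have hK : 0 ≤ K := (mul_nonneg hp hX.le).trans hpX
  have hL : 0 ≤ L :=
    nonneg_of_mul_nonneg_left ((mul_nonneg hp hY.le).trans hpY) (Real.rpow_pos_of_pos hX γ)
  have h₁ : p ^ (r₁ + γ * r₂) ≤ (K * X⁻¹) ^ (r₁ + γ * r₂) :=
    Real.rpow_le_rpow hp ((le_mul_inv_iff₀ hX).2 hpX) (by positivity)
  have h₂ : p ^ r₂ ≤ (L * X ^ γ * Y⁻¹) ^ r₂ :=
    Real.rpow_le_rpow hp ((le_mul_inv_iff₀ hY).2 hpY) hr₂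
  have h₃ : p ^ s ≤ W⁻¹ ^ s :=
    Real.rpow_le_rpow hp (by rwa [← one_div, le_div_iff₀ hW]) hs.le
  have hX_exp : X ^ (-(r₁ + γ * r₂)) * X ^ (γ * r₂) = X ^ (-r₁) := by
    rw [← Real.rpow_add hX]; ring_nf
  have hγr₂ : 0 ≤ γ * r₂ := mul_nonneg hγ hr₂
  rw [add_assoc, Real.rpow_add' hp (y := r₁ + γ * r₂) (by linarith),
    Real.rpow_add' hp (y := r₂) (by linarith)]
  calc p ^ (r₁ + γ * r₂) * (p ^ r₂ * p ^ s)
      ≤ (K * X⁻¹) ^ (r₁ + γ * r₂) * ((L * X ^ γ * Y⁻¹) ^ r₂ * W⁻¹ ^ s) := by gcongr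
    _ = K ^ (r₁ + γ * r₂) * L ^ r₂ * X ^ (-r₁) * Y ^ (-r₂) * W ^ (-s) := by
      rw [Real.mul_rpow hK (inv_nonneg.2 hX.le), Real.mul_rpow (by positivity) (inv_nonneg.2 hY.le),
        Real.mul_rpow hL (by positivity), ← Real.rpow_mul hX.le, Real.inv_rpow hX.le,
        Real.inv_rpow hY.le, Real.inv_rpow hW.le, ← Real.rpow_neg hX.le, ← Real.rpow_neg hY.le,
        ← Real.rpow_neg hW.le, ← hX_exp]
      ring

section OneAddNorm

open Module

variable {E : Type*} [NormedAddCommGroup E] [NormedSpace ℝ E] [FiniteDimensional ℝ E]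
  [MeasurableSpace E] [BorelSpace E] {μ : Measure E} [μ.IsAddHaarMeasure] {s : ℝ}

lemma integral_one_add_norm_rpow_pos (hs : finrank ℝ E < s) :
    0 < ∫ x, (1 + ‖x‖) ^ (-s) ∂μ :=
  integral_pos_of_integrable_nonneg_nonzero (x := 0)
    (continuous_const.add continuous_norm |>.rpow_const
      fun x => Or.inl (by positivity : (0 : ℝ) < 1 + ‖x‖).ne')
    (integrable_one_add_norm hs) (fun x => by positivity) (by simp)

lemma lintegral_ofReal_le_of_le_one_add_norm_rpow {f : E → ℝ} {D : ℝ} (hD : 0 ≤ D)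
    (hs : finrank ℝ E < s) (hf : ∀ x, f x ≤ D * (1 + ‖x‖) ^ (-s)) :
    ∫⁻ x, ENNReal.ofReal (f x) ∂μ ≤ ENNReal.ofReal (D * ∫ x, (1 + ‖x‖) ^ (-s) ∂μ) :=
  calc ∫⁻ x, ENNReal.ofReal (f x) ∂μ ≤ ∫⁻ x, ENNReal.ofReal (D * (1 + ‖x‖) ^ (-s)) ∂μ :=
        lintegral_mono fun x => ENNReal.ofReal_le_ofReal (hf x)
    _ = ENNReal.ofReal (D * ∫ x, (1 + ‖x‖) ^ (-s) ∂μ) := by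
        rw [← integral_const_mul, ofReal_integral_eq_lintegral_ofReal
          ((integrable_one_add_norm hs).const_mul D) (ae_of_all _ fun x => by positivity)]

end OneAddNorm

namespace Shearlet

lemma shearA_nonneg (ξ : Fin 2 → ℝ) : 0 ≤ shearA ξ := by
  unfold shearA; positivity

lemma shearA_le_div (ξ : Fin 2 → ℝ) : shearA ξ ≤ |ξ 0| / (1 + |ξ 1|) := min_le_left _ _

lemma shearA_le_abs_fst (ξ : Fin 2 → ℝ) : shearA ξ ≤ |ξ 0| :=
  (shearA_le_div ξ).trans (div_le_self (abs_nonneg _) (le_add_of_nonneg_right (abs_nonneg _)))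

lemma shearA_le_inv_one_add_sqrt (ξ : Fin 2 → ℝ) :
    shearA ξ ≤ (1 + Real.sqrt (ξ 0 ^ 2 + ξ 1 ^ 2))⁻¹ :=
  (min_le_right _ _).trans_eq (one_div _)

lemma shearA_le_one (ξ : Fin 2 → ℝ) : shearA ξ ≤ 1 :=
  (shearA_le_inv_one_add_sqrt ξ).trans (inv_le_one_of_one_le₀ (by simp))

lemma shearA_le_inv_one_add_norm (ξ : Fin 2 → ℝ) : shearA ξ ≤ (1 + ‖ξ‖)⁻¹ := by
  have hnorm : ‖ξ‖ ≤ Real.sqrt (ξ 0 ^ 2 + ξ 1 ^ 2) := by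
    refine (pi_norm_le_iff_of_nonneg (Real.sqrt_nonneg _)).2 fun i => ?_
    rw [Real.norm_eq_abs]
    refine Real.abs_le_sqrt ?_
    fin_cases i <;> simp [sq_nonneg]
  exact (shearA_le_inv_one_add_sqrt ξ).trans (inv_anti₀ (by positivity) (by linarith))

lemma shearA_le_inv_one_add_abs_fst (ξ : Fin 2 → ℝ) : shearA ξ ≤ (1 + |ξ 0|)⁻¹ :=
  (shearA_le_inv_one_add_norm ξ).trans
    (inv_anti₀ (by positivity) (by simpa using norm_le_pi_norm ξ 0))

variable {a b d : ℝ} {ξ η : Fin 2 → ℝ}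

lemma shearA_mul_shearA_mul_one_add_norm_le_one :
    shearA ξ * shearA η * (1 + ‖ξ‖) ≤ 1 := by
  calc shearA ξ * shearA η * (1 + ‖ξ‖) ≤ shearA ξ * 1 * (1 + ‖ξ‖) := by
        gcongr
        exacts [shearA_nonneg ξ, shearA_le_one η]
    _ ≤ 1 := by
        rw [mul_one, ← le_div_iff₀ (by positivity), one_div]
        exact shearA_le_inv_one_add_norm ξ

lemma shearA_mul_shearA_le_abs (h : η 0 = a * ξ 0) : shearA ξ * shearA η ≤ |a| :=
  calc shearA ξ * shearA η ≤ (1 + |ξ 0|)⁻¹ * (|a| * |ξ 0|) := by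
        rw [← abs_mul, ← h]
        exact mul_le_mul (shearA_le_inv_one_add_abs_fst ξ) (shearA_le_abs_fst η)
          (shearA_nonneg η) (by positivity)
    _ ≤ |a| := by
        rw [inv_mul_le_iff₀ (by positivity)]
        nlinarith [abs_nonneg a, abs_nonneg (ξ 0)]

lemma shearA_mul_shearA_mul_abs_le_one (h : η 0 = a * ξ 0) :
    shearA ξ * shearA η * |a| ≤ 1 :=
  calc shearA ξ * shearA η * |a| ≤ |a * ξ 0| * (1 + |a * ξ 0|)⁻¹ := by
        have hu : shearA ξ * |a| ≤ |a * ξ 0| := by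
          rw [abs_mul, mul_comm |a|]
          exact mul_le_mul_of_nonneg_right (shearA_le_abs_fst ξ) (abs_nonneg a)
        have hv : shearA η ≤ (1 + |a * ξ 0|)⁻¹ := h ▸ shearA_le_inv_one_add_abs_fst η
        rw [mul_right_comm]
        exact mul_le_mul hu hv (shearA_nonneg η) (abs_nonneg _)
    _ ≤ 1 := by
        rw [mul_inv_le_iff₀ (by positivity)]
        linarith

lemma shearA_mul_shearA_mul_add_inv_le_two (ha : a ≠ 0) (h : η 0 = a * ξ 0) :
    shearA ξ * shearA η * (|a| + |a|⁻¹) ≤ 2 := by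
  have hle : shearA ξ * shearA η * |a|⁻¹ ≤ 1 := by
    rw [mul_inv_le_iff₀ (abs_pos.2 ha), one_mul]
    exact shearA_mul_shearA_le_abs h
  linarith [shearA_mul_shearA_mul_abs_le_one h]

lemma shearA_mul_shearA_mul_abs_le (h0 : η 0 = a * ξ 0) (h1 : η 1 = b * ξ 0 + d * ξ 1) :
    shearA ξ * shearA η * |b| ≤ 2 * max |a| |d| := by
  have hu := shearA_nonneg ξ
  have hv := shearA_nonneg η
  rcases le_total (|b| * |ξ 0|) (2 * |d| * |ξ 1|) with hsmall | hlarge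
  · have hub : shearA ξ * |b| ≤ 2 * |d| := by
      refine (mul_le_mul_of_nonneg_right (shearA_le_div ξ) (abs_nonneg b)).trans ?_
      rw [div_mul_eq_mul_div, div_le_iff₀ (by positivity)]
      nlinarith [abs_nonneg d]
    calc shearA ξ * shearA η * |b| ≤ shearA ξ * |b| * 1 := by
          rw [mul_right_comm]
          exact mul_le_mul_of_nonneg_left (shearA_le_one η) (by positivity)
      _ ≤ 2 * max |a| |d| := by linarith [le_max_right |a| |d|]
  · have hη1 : |b| * |ξ 0| / 2 ≤ |η 1| := by
      have := abs_sub_abs_le_abs_sub (b * ξ 0) (-(d * ξ 1))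
      rw [sub_neg_eq_add, abs_neg, ← h1, abs_mul, abs_mul] at this
      linarith
    have hvb : shearA η * |b| ≤ 2 * |a| := by
      refine (mul_le_mul_of_nonneg_right (shearA_le_div η) (abs_nonneg b)).trans ?_
      rw [h0, abs_mul, div_mul_eq_mul_div, div_le_iff₀ (by positivity)]
      nlinarith [abs_nonneg a]
    calc shearA ξ * shearA η * |b| ≤ 1 * (shearA η * |b|) := by
          rw [mul_assoc]
          exact mul_le_mul_of_nonneg_right (shearA_le_one ξ) (by positivity)
      _ ≤ 2 * max |a| |d| := by linarith [le_max_left |a| |d|]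

lemma shearA_mul_shearA_mul_one_add_abs_le (ha : a ≠ 0) (c : ℝ) (hd : |d| = |a| ^ c)
    (h0 : η 0 = a * ξ 0) (h1 : η 1 = b * ξ 0 + d * ξ 1) :
    shearA ξ * shearA η * (1 + |b|) ≤ 3 * (|a| + |a|⁻¹) ^ (1 + |c|) := by
  have ha0 : 0 < |a| := abs_pos.2 ha
  have hX : 1 ≤ |a| + |a|⁻¹ := one_le_add_inv ha0
  have hX1 : 1 ≤ (|a| + |a|⁻¹) ^ (1 + |c|) := Real.one_le_rpow hX (by positivity)
  have hXa : |a| ≤ (|a| + |a|⁻¹) ^ (1 + |c|) :=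
    (le_add_of_nonneg_right (inv_pos.2 ha0).le).trans
      (Real.self_le_rpow_of_one_le hX (by linarith [abs_nonneg c]))
  have hXd : |d| ≤ (|a| + |a|⁻¹) ^ (1 + |c|) :=
    hd ▸ (Real.rpow_le_add_inv_rpow_abs ha0 c).trans
      (Real.rpow_le_rpow_of_exponent_le hX (by linarith))
  have hp1 : shearA ξ * shearA η ≤ 1 :=
    mul_le_one₀ (shearA_le_one ξ) (shearA_nonneg η) (shearA_le_one η)
  rw [mul_one_add]
  linarith [shearA_mul_shearA_mul_abs_le h0 h1, max_le hXa hXd]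

end Shearlet

open Shearlet Module in
theorem shearlet_Phi_estimate_general (c : ℝ) (t r₁ r₂ : ℕ) (hr1 : 1 ≤ r₁)
    (ht : 3 * (r₁ : ℝ) + (3 + 6 * |c|) * r₂ + 6 * |c| + 2 ≤ t) :
    ∃ C > 0, ∀ a b : ℝ, a ≠ 0 →
      ∫⁻ ξ : Fin 2 → ℝ,
          ENNReal.ofReal (shearA ξ ^ t *
            shearA ![a * ξ 0, b * ξ 0 + Real.sign a * |a| ^ c * ξ 1] ^ t)
        ≤ ENNReal.ofReal
            (C * (|a| + |a|⁻¹) ^ (-(r₁ : ℝ)) * (1 + |b|) ^ (-(r₂ : ℝ))) := by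
  set s : ℝ := t - r₁ - (1 + |c|) * r₂ - r₂
  have hs : 2 < s := by
    have : (1 : ℝ) ≤ r₁ := by exact_mod_cast hr1
    nlinarith [abs_nonneg c, Nat.cast_nonneg (α := ℝ) r₂]
  have hs_finrank : (finrank ℝ (Fin 2 → ℝ) : ℝ) < s := by simpa using hs
  refine ⟨2 ^ (r₁ + (1 + |c|) * r₂) * 3 ^ (r₂ : ℝ) * ∫ ξ : Fin 2 → ℝ, (1 + ‖ξ‖) ^ (-s),
    mul_pos (by positivity) (integral_one_add_norm_rpow_pos hs_finrank), fun a b ha => ?_⟩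
  refine (lintegral_ofReal_le_of_le_one_add_norm_rpow
    (D := 2 ^ (r₁ + (1 + |c|) * r₂) * 3 ^ (r₂ : ℝ) * (|a| + |a|⁻¹) ^ (-(r₁ : ℝ)) *
      (1 + |b|) ^ (-(r₂ : ℝ))) (by positivity) hs_finrank fun ξ => ?_).trans_eq (by ring_nf)
  have hd : |Real.sign a * |a| ^ c| = |a| ^ c := by
    rw [abs_mul, abs_of_pos (Real.rpow_pos_of_pos (abs_pos.2 ha) c)]
    rcases ha.lt_or_gt with h | h <;> simp [Real.sign_of_neg, Real.sign_of_pos, h]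
  rw [← mul_pow, ← Real.rpow_natCast, show (t : ℝ) = r₁ + (1 + |c|) * r₂ + r₂ + s by ring]
  exact Real.rpow_le_of_mul_le (mul_nonneg (shearA_nonneg _) (shearA_nonneg _))
    (by positivity) (by positivity) (by positivity)
    (shearA_mul_shearA_mul_add_inv_le_two ha rfl)
    (shearA_mul_shearA_mul_one_add_abs_le ha c hd rfl rfl)
    shearA_mul_shearA_mul_one_add_norm_le_one
    (by positivity) (by positivity) (by positivity) (by linarith)

/-- The key shearlet coefficient estimate: for integers `t, r₁, r₂ ≥ 1` with `r₂ > 1`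
and `t ≥ 3r₁ + (3+6|c|)r₂ + 6|c| + 2`, there is `C > 0` such that for all `a ≠ 0`, `b`,
`∫_{ℝ²} A(ξ)^t A(hᵀξ)^t dξ ≤ C (|a|+|a|⁻¹)^{-r₁} (1+|b|)^{-r₂}`, where
`hᵀξ = (aξ₁, bξ₁ + a^c ξ₂)` and `a^c = sign(a)|a|^c`. -/
theorem shearlet_Phi_estimate (c : ℝ) (t r₁ r₂ : ℕ) (ht1 : 1 ≤ t) (hr1 : 1 ≤ r₁)
    (hr2 : 1 < r₂)
    (ht : 3 * (r₁ : ℝ) + (3 + 6 * |c|) * r₂ + 6 * |c| + 2 ≤ t) :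
    ∃ C > 0, ∀ a b : ℝ, a ≠ 0 →
      ∫⁻ ξ : Fin 2 → ℝ,
          ENNReal.ofReal (shearA ξ ^ t *
            shearA ![a * ξ 0, b * ξ 0 + Real.sign a * |a| ^ c * ξ 1] ^ t)
        ≤ ENNReal.ofReal
            (C * (|a| + |a|⁻¹) ^ (-(r₁ : ℝ)) * (1 + |b|) ^ (-(r₂ : ℝ))) :=
  shearlet_Phi_estimate_general c t r₁ r₂ hr1 ht
end

section
/- Let (ψ_λ)_{λ∈Λ} be a frame in a Hilbert space ℋ with frame bounds, let 1 ≤ p < 2, and suppose f = Σ_λ c_λ ψ_λ with (c_λ) ∈ ℓ^p(Λ). Then there is a constant C (depending only on p and the frame bounds) with ( Σ_{n≥1} n^{-p/2} E_n(f)^p )^{1/p} ≤ C ‖(c_λ)‖_{ℓ^p}, where E_n(f) = inf{ ‖f − Σ_{λ∈Λ'} d_λ ψ_λ‖_ℋ : d_λ ∈ ℂ, |Λ'| ≤ n } is the n-term nonlinear approximation error. -/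
/-!
Let `r₀ ≥ r₁ ≥ ⋯` be the decreasing rearrangement of `(‖c_λ‖)`. The synthesis map is the adjoint
of the analysis map, so the upper frame bound gives `‖∑ h_λ ψ_λ‖² ≤ B ∑ ‖h_λ‖²`; keeping the `n`
largest coefficients of `f` therefore yields `E_n(f)² ≤ B ∑_{k ≥ n} r_k²`. With `q = p / 2 < 1` and
`u_k = r_k²`, the theorem reduces to the Hardy-type inequality
`∑_n (n + 1)^{-q} (∑_{k > n} u_k)^q ≤ (1 - 2^{q-1})⁻¹ ∑_k u_k^q` for decreasing `u ≥ 0`: split each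
tail into the dyadic blocks `[m 2^j, m 2^{j+1})`, bound each block by its first term, use the
subadditivity of `t ↦ t^q`, and sum the resulting geometric series in `j`.
-/

open scoped ENNReal
open Finset Filter Topology

theorem one_sub_two_rpow_pos {q : ℝ} (hq : q < 1) : 0 < 1 - (2 : ℝ) ^ (q - 1) :=
  sub_pos.2 (Real.rpow_lt_one_of_one_lt_of_neg one_lt_two (by linarith))

namespace ENNReal

theorem rpow_tsum_le_tsum_rpow {ι : Type*} (f : ι → ℝ≥0∞) {q : ℝ} (hq0 : 0 < q) (hq1 : q ≤ 1) :
    (∑' i, f i) ^ q ≤ ∑' i, f i ^ q := by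
  rw [ENNReal.tsum_eq_iSup_sum, (ENNReal.monotone_rpow_of_nonneg hq0.le).map_ciSup_of_continuousAt
    ENNReal.continuous_rpow_const.continuousAt]
  refine iSup_le fun s => ?_
  calc (∑ i ∈ s, f i) ^ q ≤ ∑ i ∈ s, f i ^ q :=
        le_sum_of_subadditive (· ^ q) (ENNReal.zero_rpow_of_pos hq0).le
          (fun x y => ENNReal.rpow_add_le_add_rpow x y hq0.le hq1) s f
    _ ≤ ∑' i, f i ^ q := ENNReal.sum_le_tsum s

theorem tsum_add_le_tsum_dyadic {u : ℕ → ℝ≥0∞} (hu : Antitone u) {m : ℕ} (hm : 0 < m) :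
    ∑' k, u (k + m) ≤ ∑' j, (m * 2 ^ j : ℝ≥0∞) * u (m * 2 ^ j) := by
  refine ENNReal.tsum_le_of_sum_range_le fun N => ?_
  have hN : m + N ≤ m * 2 ^ N := by nlinarith [N.lt_two_pow_self]
  calc ∑ k ∈ range N, u (k + m) = ∑ k ∈ Ico m (m + N), u k := by
        rw [sum_Ico_eq_sum_range]
        simp [add_comm]
    _ ≤ ∑ k ∈ Ico (m * 2 ^ 0) (m * 2 ^ N), u k :=
        sum_le_sum_of_subset (Ico_subset_Ico (by simp) hN)
    _ ≤ ∑ j ∈ range N, (m * 2 ^ (j + 1) - m * 2 ^ j) • u (m * 2 ^ j) :=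
        le_sum_schlomilch' (fun _ _ _ h => hu h) (fun j => by positivity)
          (fun i j h => by gcongr; norm_num) N
    _ = ∑ j ∈ range N, (m * 2 ^ j : ℝ≥0∞) * u (m * 2 ^ j) := by
        refine sum_congr rfl fun j _ => ?_
        rw [show m * 2 ^ (j + 1) - m * 2 ^ j = m * 2 ^ j from Nat.sub_eq_of_eq_add (by ring),
          nsmul_eq_mul]
        push_cast
        rfl
    _ ≤ _ := ENNReal.sum_le_tsum _

theorem tsum_mul_le_tsum_of_antitone {v : ℕ → ℝ≥0∞} (hv : Antitone v) (d : ℕ) [NeZero d] :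
    ∑' n : ℕ, (d : ℝ≥0∞) * v ((n + 1) * d) ≤ ∑' k, v k := by
  rw [← (Nat.divModEquiv d).symm.tsum_eq (f := v), ENNReal.tsum_prod']
  refine ENNReal.tsum_le_tsum fun n => ?_
  rw [tsum_fintype]
  calc (d : ℝ≥0∞) * v ((n + 1) * d) = ∑ _i : Fin d, v ((n + 1) * d) := by simp
    _ ≤ _ := sum_le_sum fun i _ =>
        hv (by simp only [Nat.divModEquiv_symm_apply]; nlinarith [i.is_lt])

theorem tsum_rpow_mul_rpow_tsum_add_le {u : ℕ → ℝ≥0∞} (hu : Antitone u) {q : ℝ} (hq0 : 0 < q)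
    (hq1 : q < 1) :
    ∑' n : ℕ, ((n : ℝ≥0∞) + 1) ^ (-q) * (∑' k, u (k + (n + 1))) ^ q
      ≤ (1 - 2 ^ (q - 1))⁻¹ * ∑' k, u k ^ q := by
  set ρ : ℝ≥0∞ := 2 ^ (q - 1)
  have hpow (j : ℕ) : ((2 : ℝ≥0∞) ^ j) ^ q = ρ ^ j * 2 ^ j := by
    have h2 : (2 : ℝ≥0∞) ^ q = ρ * 2 := by
      conv_lhs => rw [← sub_add_cancel q 1]
      rw [ENNReal.rpow_add _ _ two_ne_zero ENNReal.ofNat_ne_top, ENNReal.rpow_one]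
    rw [← ENNReal.rpow_natCast_mul, mul_comm, ENNReal.rpow_mul_natCast, h2, mul_pow]
  have hterm (n : ℕ) : ((n : ℝ≥0∞) + 1) ^ (-q) * (∑' k, u (k + (n + 1))) ^ q
      ≤ ∑' j : ℕ, ρ ^ j * (2 ^ j * u ((n + 1) * 2 ^ j) ^ q) := by
    have hn : ((n : ℝ≥0∞) + 1) ^ (-q) * ((n : ℝ≥0∞) + 1) ^ q = 1 := by
      rw [ENNReal.rpow_neg, ENNReal.inv_mul_cancel (by positivity)
        (ENNReal.rpow_ne_top_of_nonneg hq0.le (by simp))]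
    calc ((n : ℝ≥0∞) + 1) ^ (-q) * (∑' k, u (k + (n + 1))) ^ q
        ≤ ((n : ℝ≥0∞) + 1) ^ (-q) *
            ∑' j : ℕ, (((n : ℝ≥0∞) + 1) * 2 ^ j * u ((n + 1) * 2 ^ j)) ^ q := by
          gcongr
          refine (ENNReal.rpow_le_rpow ?_ hq0.le).trans (rpow_tsum_le_tsum_rpow _ hq0 hq1.le)
          exact_mod_cast tsum_add_le_tsum_dyadic hu n.succ_pos
      _ = ∑' j : ℕ, ρ ^ j * (2 ^ j * u ((n + 1) * 2 ^ j) ^ q) := by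
          rw [← ENNReal.tsum_mul_left]
          refine tsum_congr fun j => ?_
          rw [ENNReal.mul_rpow_of_nonneg _ _ hq0.le, ENNReal.mul_rpow_of_nonneg _ _ hq0.le, hpow,
            ← mul_assoc, ← mul_assoc, hn]
          ring
  calc ∑' n : ℕ, ((n : ℝ≥0∞) + 1) ^ (-q) * (∑' k, u (k + (n + 1))) ^ q
      ≤ ∑' (n : ℕ) (j : ℕ), ρ ^ j * (2 ^ j * u ((n + 1) * 2 ^ j) ^ q) :=
        ENNReal.tsum_le_tsum hterm
    _ = ∑' j : ℕ, ρ ^ j * ∑' n : ℕ, ((2 ^ j : ℕ) : ℝ≥0∞) * u ((n + 1) * 2 ^ j) ^ q := by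
        rw [ENNReal.tsum_comm]
        simp [ENNReal.tsum_mul_left]
    _ ≤ ∑' j : ℕ, ρ ^ j * ∑' k, u k ^ q := by
        refine ENNReal.tsum_le_tsum fun j => mul_le_mul_right ?_ _
        exact tsum_mul_le_tsum_of_antitone (fun _ _ h => ENNReal.rpow_le_rpow (hu h) hq0.le) _
    _ = (1 - ρ)⁻¹ * ∑' k, u k ^ q := by
        rw [ENNReal.tsum_mul_right, ENNReal.tsum_geometric]

end ENNReal

theorem summable_and_tsum_le_of_tsum_ofReal_le {ι : Type*} {f : ι → ℝ} (hf : ∀ i, 0 ≤ f i)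
    {c : ℝ} (hc : 0 ≤ c) (h : ∑' i, ENNReal.ofReal (f i) ≤ ENNReal.ofReal c) :
    Summable f ∧ ∑' i, f i ≤ c := by
  have hs : Summable f := by
    simpa [ENNReal.toReal_ofReal (hf _)] using
      ENNReal.summable_toReal (ne_top_of_le_ne_top ENNReal.ofReal_ne_top h)
  refine ⟨hs, ?_⟩
  rwa [← ENNReal.ofReal_le_ofReal_iff hc, ENNReal.ofReal_tsum_of_nonneg hf hs]

theorem Real.summable_and_tsum_rpow_mul_rpow_tsum_add_le {u : ℕ → ℝ} (hu0 : ∀ k, 0 ≤ u k)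
    (hu : Antitone u) (hsum : Summable u) {q : ℝ} (hq0 : 0 < q) (hq1 : q < 1)
    (hsumq : Summable fun k => u k ^ q) :
    Summable (fun n : ℕ => ((n : ℝ) + 1) ^ (-q) * (∑' k, u (k + (n + 1))) ^ q) ∧
      ∑' n : ℕ, ((n : ℝ) + 1) ^ (-q) * (∑' k, u (k + (n + 1))) ^ q
        ≤ (1 - 2 ^ (q - 1))⁻¹ * ∑' k, u k ^ q := by
  have hρ := one_sub_two_rpow_pos hq1
  have htail (n : ℕ) : 0 ≤ ∑' k, u (k + (n + 1)) := tsum_nonneg fun k => hu0 _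
  have huq (k : ℕ) : 0 ≤ u k ^ q := Real.rpow_nonneg (hu0 k) q
  refine summable_and_tsum_le_of_tsum_ofReal_le (fun n => by have := htail n; positivity)
    (mul_nonneg (inv_pos.2 hρ).le (tsum_nonneg huq)) ?_
  have hu' : Antitone fun k => ENNReal.ofReal (u k) := fun _ _ h => ENNReal.ofReal_le_ofReal (hu h)
  convert ENNReal.tsum_rpow_mul_rpow_tsum_add_le hu' hq0 hq1 using 1
  · refine tsum_congr fun n => ?_
    rw [ENNReal.ofReal_mul (by positivity), ← ENNReal.ofReal_rpow_of_nonneg (htail n) hq0.le,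
      ENNReal.ofReal_tsum_of_nonneg (fun k => hu0 _) ((summable_nat_add_iff _).2 hsum),
      ← ENNReal.ofReal_rpow_of_pos (by positivity)]
    norm_cast
  · rw [ENNReal.ofReal_mul (inv_pos.2 hρ).le, ENNReal.ofReal_tsum_of_nonneg huq hsumq,
      ENNReal.ofReal_inv_of_pos hρ, ENNReal.ofReal_sub _ (by positivity),
      ← ENNReal.ofReal_rpow_of_pos two_pos]
    simp [ENNReal.ofReal_rpow_of_nonneg (hu0 _) hq0.le]

section DecreasingRearrangement

open scoped Classical

variable {Λ : Type*} (a : Λ → ℝ)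

def IsGreedyChoice (s : Finset Λ) (l : Λ) : Prop :=
  l ∉ s ∧ 0 < a l ∧ ∀ l' ∉ s, a l' ≤ a l

/-- `greedySet a m` consists of `m` indices carrying the `m` largest values of `a`, or of all
indices with `0 < a l` if there are fewer. `decreasingRearrangement a m` is the `(m + 1)`-st
largest value of `a`, and `0` once the positive values are exhausted. -/
noncomputable def greedySet : ℕ → Finset Λ
  | 0 => ∅
  | m + 1 =>
    if h : ∃ l, IsGreedyChoice a (greedySet m) l then insert h.choose (greedySet m)
    else greedySet m

noncomputable def decreasingRearrangement (m : ℕ) : ℝ :=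
  if h : ∃ l, IsGreedyChoice a (greedySet a m) l then a h.choose else 0

theorem greedySet_succ_cases (m : ℕ) :
    (∃ l, IsGreedyChoice a (greedySet a m) l ∧ greedySet a (m + 1) = insert l (greedySet a m) ∧
        decreasingRearrangement a m = a l) ∨
      ((∀ l, ¬IsGreedyChoice a (greedySet a m) l) ∧ greedySet a (m + 1) = greedySet a m ∧
        decreasingRearrangement a m = 0) := by
  by_cases h : ∃ l, IsGreedyChoice a (greedySet a m) l
  · exact Or.inl ⟨h.choose, h.choose_spec, by simp [greedySet, h],
      by simp [decreasingRearrangement, h]⟩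
  · exact Or.inr ⟨not_exists.1 h, by simp [greedySet, h], by simp [decreasingRearrangement, h]⟩

theorem card_greedySet_le (m : ℕ) : (greedySet a m).card ≤ m := by
  induction m with
  | zero => simp [greedySet]
  | succ m ih =>
    rcases greedySet_succ_cases a m with ⟨l, -, hset, -⟩ | ⟨-, hset, -⟩ <;> rw [hset]
    · exact (card_insert_le _ _).trans (by omega)
    · omega

theorem greedySet_mono : Monotone (greedySet a) := by
  refine monotone_nat_of_le_succ fun m => ?_
  rcases greedySet_succ_cases a m with ⟨l, -, hset, -⟩ | ⟨-, hset, -⟩ <;> rw [hset]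
  exact subset_insert _ _

theorem decreasingRearrangement_nonneg (m : ℕ) : 0 ≤ decreasingRearrangement a m := by
  rcases greedySet_succ_cases a m with ⟨l, hl, -, hval⟩ | ⟨-, -, hval⟩ <;> rw [hval]
  exact hl.2.1.le

theorem antitone_decreasingRearrangement : Antitone (decreasingRearrangement a) := by
  refine antitone_nat_of_succ_le fun m => ?_
  rcases greedySet_succ_cases a (m + 1) with ⟨l', hl', -, hval'⟩ | ⟨-, -, hval'⟩ <;> rw [hval']
  · rcases greedySet_succ_cases a m with ⟨l, hl, hset, hval⟩ | ⟨hnone, hset, -⟩ <;>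
      rw [hset] at hl'
    · exact hval ▸ hl.2.2 l' fun h => hl'.1 (mem_insert_of_mem h)
    · exact absurd hl' (hnone l')
  · exact decreasingRearrangement_nonneg a m

theorem sum_greedySet {M : Type*} [AddCommMonoid M] (φ : ℝ → M) (hφ : φ 0 = 0) (m : ℕ) :
    ∑ l ∈ greedySet a m, φ (a l) = ∑ k ∈ range m, φ (decreasingRearrangement a k) := by
  induction m with
  | zero => simp [greedySet]
  | succ m ih =>
    rw [sum_range_succ, ← ih]
    rcases greedySet_succ_cases a m with ⟨l, hl, hset, hval⟩ | ⟨-, hset, hval⟩ <;>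
      rw [hset, hval]
    · rw [sum_insert hl.1, add_comm]
    · rw [hφ, add_zero]

section Nonneg

variable {a} (ha : ∀ l, 0 ≤ a l) {φ : ℝ → ℝ} (hφ0 : φ 0 = 0) (hφ : ∀ x, 0 ≤ x → 0 ≤ φ x)
include ha hφ0 hφ

theorem sum_range_comp_decreasingRearrangement_le (hsum : Summable fun l => φ (a l)) (m : ℕ) :
    ∑ k ∈ range m, φ (decreasingRearrangement a k) ≤ ∑' l, φ (a l) := by
  rw [← sum_greedySet a φ hφ0]
  exact hsum.sum_le_tsum _ fun l _ => hφ _ (ha l)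

theorem summable_comp_decreasingRearrangement (hsum : Summable fun l => φ (a l)) :
    Summable fun k => φ (decreasingRearrangement a k) :=
  summable_of_sum_range_le (fun k => hφ _ (decreasingRearrangement_nonneg a k))
    (sum_range_comp_decreasingRearrangement_le ha hφ0 hφ hsum)

theorem tsum_comp_decreasingRearrangement_le (hsum : Summable fun l => φ (a l)) :
    ∑' k, φ (decreasingRearrangement a k) ≤ ∑' l, φ (a l) :=
  Real.tsum_le_of_sum_range_le (fun k => hφ _ (decreasingRearrangement_nonneg a k))
    (sum_range_comp_decreasingRearrangement_le ha hφ0 hφ hsum)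

end Nonneg

section TendstoZero

variable {a} (ha0 : Tendsto a cofinite (𝓝 0))
include ha0

theorem finite_setOf_le_of_tendsto_cofinite {ε : ℝ} (hε : 0 < ε) : {l | ε ≤ a l}.Finite := by
  simpa using eventually_cofinite.1 (ha0.eventually (gt_mem_nhds hε))

theorem exists_isGreedyChoice {s : Finset Λ} {l : Λ} (hl : l ∉ s) (hpos : 0 < a l) :
    ∃ l', IsGreedyChoice a s l' := by
  have hT := finite_setOf_le_of_tendsto_cofinite ha0 hpos
  obtain ⟨l', hl', hmax⟩ := (hT.toFinset \ s).exists_max_image a ⟨l, by simp [hl]⟩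
  rw [Finset.mem_sdiff, Set.Finite.mem_toFinset] at hl'
  refine ⟨l', hl'.2, hpos.trans_le hl'.1, fun l'' hl'' => ?_⟩
  by_cases h : a l ≤ a l''
  · exact hmax l'' (by simpa [h] using hl'')
  · exact (not_le.1 h).le.trans hl'.1

theorem le_decreasingRearrangement {m : ℕ} {l : Λ} (hl : l ∉ greedySet a m) :
    a l ≤ decreasingRearrangement a m := by
  rcases greedySet_succ_cases a m with ⟨l', hl', -, hval⟩ | ⟨hnone, -, hval⟩ <;> rw [hval]
  · exact hl'.2.2 l hl
  · by_contra! hpos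
    obtain ⟨l', hl'⟩ := exists_isGreedyChoice ha0 hl hpos
    exact hnone l' hl'

theorem eventually_mem_greedySet {l : Λ} (hl : 0 < a l) : ∀ᶠ m in atTop, l ∈ greedySet a m := by
  suffices ∃ m, l ∈ greedySet a m by
    obtain ⟨m, hm⟩ := this
    exact eventually_atTop.2 ⟨m, fun n hn => greedySet_mono a hn hm⟩
  by_contra! hnot
  -- Otherwise every chosen value is `≥ a l`, and only finitely many indices carry such values.
  set T := (finite_setOf_le_of_tendsto_cofinite ha0 hl).toFinset
  have hcount := sum_greedySet a (fun x => if a l ≤ x then 1 else 0) (by simp [not_le.2 hl])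
    (T.card + 1)
  simp only [sum_boole, Nat.cast_id, filter_true_of_mem fun k _ =>
    le_decreasingRearrangement ha0 (hnot k), card_range] at hcount
  have : (filter (fun l' => a l ≤ a l') (greedySet a (T.card + 1))).card ≤ T.card :=
    card_le_card fun l' hl' => by simpa [T] using (mem_filter.1 hl').2
  omega

theorem tsum_ite_greedySet_le (ha : ∀ l, 0 ≤ a l) {φ : ℝ → ℝ} (hφ0 : φ 0 = 0)
    (hφ : ∀ x, 0 ≤ x → 0 ≤ φ x) (m : ℕ)
    (hsum : Summable fun k => φ (decreasingRearrangement a (k + m))) :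
    ∑' l, (if l ∈ greedySet a m then 0 else φ (a l))
      ≤ ∑' k, φ (decreasingRearrangement a (k + m)) := by
  refine Real.tsum_le_of_sum_le (fun l => ?_) fun G => ?_
  · split_ifs
    exacts [le_rfl, hφ _ (ha l)]
  obtain ⟨M, hmM, hG⟩ : ∃ M, m ≤ M ∧ ∀ l ∈ G, 0 < a l → l ∈ greedySet a M :=
    ((eventually_ge_atTop m).and ((eventually_all_finset G).2 fun l _ =>
      eventually_imp_distrib_left.2 (eventually_mem_greedySet ha0))).exists
  have hsdiff : ∑ l ∈ greedySet a M \ greedySet a m, φ (a l)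
      = ∑ k ∈ Ico m M, φ (decreasingRearrangement a k) := by
    have h1 := sum_sdiff (f := fun l => φ (a l)) (greedySet_mono a hmM)
    have h2 := sum_range_add_sum_Ico (fun k => φ (decreasingRearrangement a k)) hmM
    rw [sum_greedySet a φ hφ0, sum_greedySet a φ hφ0] at h1
    linarith
  calc ∑ l ∈ G, (if l ∈ greedySet a m then 0 else φ (a l))
      ≤ ∑ l ∈ G, (if l ∈ greedySet a M \ greedySet a m then φ (a l) else 0) := by
        refine sum_le_sum fun l hl => ?_
        by_cases hm : l ∈ greedySet a m
        · simp [hm]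
        rcases (ha l).eq_or_lt with h | h
        · simp [← h, hφ0]
        · simp [hm, hG l hl h]
    _ ≤ ∑ l ∈ greedySet a M \ greedySet a m, φ (a l) := by
        rw [sum_ite_mem]
        exact sum_le_sum_of_subset_of_nonneg inter_subset_right fun l _ _ => hφ _ (ha l)
    _ = ∑ k ∈ range (M - m), φ (decreasingRearrangement a (k + m)) := by
        rw [hsdiff, sum_Ico_eq_sum_range]
        simp only [add_comm]
    _ ≤ _ := hsum.sum_le_tsum _ fun k _ => hφ _ (decreasingRearrangement_nonneg a _)

end TendstoZero

end DecreasingRearrangement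

section BestNTermApproximation

variable {𝕜 E Λ : Type*} [RCLike 𝕜] [NormedAddCommGroup E] [InnerProductSpace 𝕜 E]

theorem summable_norm_sq_of_summable_norm_rpow {ι F : Type*} [NormedAddCommGroup F] {c : ι → F}
    {p : ℝ} (hp0 : 0 < p) (hp2 : p ≤ 2) (hc : Summable fun i => ‖c i‖ ^ p) :
    Summable fun i => ‖c i‖ ^ 2 := by
  have hp : Memℓp c (ENNReal.ofReal p) :=
    (memℓp_gen_iff (by rwa [ENNReal.toReal_ofReal hp0.le])).2
      (by rwa [ENNReal.toReal_ofReal hp0.le])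
  have h2 : Memℓp c 2 := hp.of_exponent_ge (by simpa using ENNReal.ofReal_le_ofReal hp2)
  simpa only [ENNReal.toReal_ofNat, Real.rpow_two] using (memℓp_gen_iff (by norm_num)).1 h2

theorem norm_sq_le_of_hasSum_of_bessel {ψ : Λ → E} {B : ℝ} (hB0 : 0 ≤ B)
    (hsum : ∀ g, Summable fun l => ‖(inner 𝕜 g (ψ l) : 𝕜)‖ ^ 2)
    (hB : ∀ g, ∑' l, ‖(inner 𝕜 g (ψ l) : 𝕜)‖ ^ 2 ≤ B * ‖g‖ ^ 2)
    {c : Λ → 𝕜} {g : E} (hg : HasSum (fun l => c l • ψ l) g) (hc : Summable fun l => ‖c l‖ ^ 2) :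
    ‖g‖ ^ 2 ≤ B * ∑' l, ‖c l‖ ^ 2 := by
  have hinner : HasSum (fun l => c l * inner 𝕜 g (ψ l)) (inner 𝕜 g g) := by
    simpa [inner_smul_right] using hg.mapL (innerSL 𝕜 g)
  obtain ⟨hsum', hCS⟩ := Real.summable_and_inner_le_Lp_mul_Lq_tsum_of_nonneg
    Real.HolderConjugate.two_two (f := fun l => ‖c l‖) (g := fun l => ‖(inner 𝕜 g (ψ l) : 𝕜)‖)
    (fun _ => norm_nonneg _) (fun _ => norm_nonneg _) (by simpa using hc) (by simpa using hsum g)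
  have h1 : ‖g‖ ^ 2 ≤ √(∑' l, ‖c l‖ ^ 2) * (√B * ‖g‖) := calc
    ‖g‖ ^ 2 = ‖(inner 𝕜 g g : 𝕜)‖ := by simp [inner_self_eq_norm_sq_to_K]
    _ ≤ ∑' l, ‖c l‖ * ‖(inner 𝕜 g (ψ l) : 𝕜)‖ := by
        rw [← hinner.tsum_eq]
        refine (norm_tsum_le_tsum_norm ?_).trans_eq (by simp only [norm_mul])
        simpa only [norm_mul] using hsum'
    _ ≤ √(∑' l, ‖c l‖ ^ 2) * √(∑' l, ‖(inner 𝕜 g (ψ l) : 𝕜)‖ ^ 2) := by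
        simpa [Real.sqrt_eq_rpow] using hCS
    _ ≤ √(∑' l, ‖c l‖ ^ 2) * (√B * ‖g‖) := by
        gcongr
        rw [← Real.sqrt_sq (norm_nonneg g), ← Real.sqrt_mul hB0]
        exact Real.sqrt_le_sqrt (hB g)
  have h2 : ‖g‖ ≤ √(∑' l, ‖c l‖ ^ 2) * √B := by
    nlinarith [norm_nonneg g, mul_nonneg (Real.sqrt_nonneg (∑' l, ‖c l‖ ^ 2)) (Real.sqrt_nonneg B)]
  calc ‖g‖ ^ 2 ≤ (√(∑' l, ‖c l‖ ^ 2) * √B) ^ 2 := by gcongr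
    _ = B * ∑' l, ‖c l‖ ^ 2 := by
        rw [mul_pow, Real.sq_sqrt hB0, Real.sq_sqrt (tsum_nonneg fun _ => by positivity), mul_comm]

variable (𝕜) in
noncomputable def bestNTermError (ψ : Λ → E) (f : E) (n : ℕ) : ℝ :=
  sInf {e : ℝ | ∃ (F : Finset Λ) (d : Λ → 𝕜), F.card ≤ n ∧ e = ‖f - ∑ l ∈ F, d l • ψ l‖}

theorem bestNTermError_nonneg (ψ : Λ → E) (f : E) (n : ℕ) : 0 ≤ bestNTermError 𝕜 ψ f n :=
  Real.sInf_nonneg (by rintro _ ⟨F, d, -, rfl⟩; exact norm_nonneg _)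

theorem bestNTermError_le (ψ : Λ → E) (f : E) {n : ℕ} {F : Finset Λ} (hF : F.card ≤ n)
    (d : Λ → 𝕜) : bestNTermError 𝕜 ψ f n ≤ ‖f - ∑ l ∈ F, d l • ψ l‖ :=
  csInf_le ⟨0, by rintro _ ⟨F, d, -, rfl⟩; exact norm_nonneg _⟩ ⟨F, d, hF, rfl⟩

theorem bestNTermError_sq_le [DecidableEq Λ] {ψ : Λ → E} {B : ℝ} (hB0 : 0 ≤ B)
    (hsum : ∀ g, Summable fun l => ‖(inner 𝕜 g (ψ l) : 𝕜)‖ ^ 2)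
    (hB : ∀ g, ∑' l, ‖(inner 𝕜 g (ψ l) : 𝕜)‖ ^ 2 ≤ B * ‖g‖ ^ 2)
    {c : Λ → 𝕜} {f : E} (hf : HasSum (fun l => c l • ψ l) f) (hc : Summable fun l => ‖c l‖ ^ 2)
    {n : ℕ} {F : Finset Λ} (hF : F.card ≤ n) :
    bestNTermError 𝕜 ψ f n ^ 2 ≤ B * ∑' l, if l ∈ F then 0 else ‖c l‖ ^ 2 := by
  have hrest : HasSum (fun l => (if l ∈ F then 0 else c l) • ψ l) (f - ∑ l ∈ F, c l • ψ l) := by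
    have hF' : HasSum (fun l => if l ∈ F then c l • ψ l else 0) (∑ l ∈ F, c l • ψ l) := by
      simpa using hasSum_sum_of_ne_finset_zero (s := F) fun l (hl : l ∉ F) => if_neg hl
    convert hf.sub hF' using 1
    funext l
    split_ifs <;> simp
  have hc' : Summable fun l => ‖if l ∈ F then 0 else c l‖ ^ 2 :=
    hc.of_nonneg_of_le (fun _ => by positivity) fun l => by split_ifs <;> simp
  calc bestNTermError 𝕜 ψ f n ^ 2 ≤ ‖f - ∑ l ∈ F, c l • ψ l‖ ^ 2 := by
        gcongr
        exacts [bestNTermError_nonneg ψ f n, bestNTermError_le ψ f hF c]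
    _ ≤ B * ∑' l, ‖if l ∈ F then 0 else c l‖ ^ 2 :=
        norm_sq_le_of_hasSum_of_bessel hB0 hsum hB hrest hc'
    _ = B * ∑' l, if l ∈ F then 0 else ‖c l‖ ^ 2 := by
        congr 1
        exact tsum_congr fun l => by split_ifs <;> simp

theorem bestNTermError_sq_le_tsum_decreasingRearrangement {ψ : Λ → E} {B : ℝ} (hB0 : 0 ≤ B)
    (hsum : ∀ g, Summable fun l => ‖(inner 𝕜 g (ψ l) : 𝕜)‖ ^ 2)
    (hB : ∀ g, ∑' l, ‖(inner 𝕜 g (ψ l) : 𝕜)‖ ^ 2 ≤ B * ‖g‖ ^ 2)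
    {c : Λ → 𝕜} {f : E} (hf : HasSum (fun l => c l • ψ l) f) (hc : Summable fun l => ‖c l‖ ^ 2)
    (m : ℕ) :
    bestNTermError 𝕜 ψ f m ^ 2
      ≤ B * ∑' k, decreasingRearrangement (fun l => ‖c l‖) (k + m) ^ 2 := by
  classical
  have ha0 : Tendsto (fun l => ‖c l‖) cofinite (𝓝 0) := by
    simpa [Function.comp_def] using
      (Real.continuous_sqrt.tendsto 0).comp hc.tendsto_cofinite_zero
  have hr2 := summable_comp_decreasingRearrangement (fun l => norm_nonneg (c l))
    (φ := fun x => x ^ 2) (by simp) (fun x _ => sq_nonneg x) hc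
  refine (bestNTermError_sq_le hB0 hsum hB hf hc (card_greedySet_le (fun l => ‖c l‖) m)).trans ?_
  gcongr
  exact tsum_ite_greedySet_le ha0 (fun l => norm_nonneg _) (φ := fun x => x ^ 2) (by simp)
    (fun x _ => sq_nonneg x) m ((summable_nat_add_iff m).2 hr2)

theorem tsum_rpow_mul_bestNTermError_rpow_le {ψ : Λ → E} {B p : ℝ} (hB0 : 0 ≤ B) (hp0 : 0 < p)
    (hp2 : p < 2) (hsum : ∀ g, Summable fun l => ‖(inner 𝕜 g (ψ l) : 𝕜)‖ ^ 2)
    (hB : ∀ g, ∑' l, ‖(inner 𝕜 g (ψ l) : 𝕜)‖ ^ 2 ≤ B * ‖g‖ ^ 2)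
    {c : Λ → 𝕜} {f : E} (hf : HasSum (fun l => c l • ψ l) f) (hc : Summable fun l => ‖c l‖ ^ p) :
    ∑' n : ℕ, ((n : ℝ) + 1) ^ (-(p / 2)) * bestNTermError 𝕜 ψ f (n + 1) ^ p
      ≤ B ^ (p / 2) * (1 - 2 ^ (p / 2 - 1))⁻¹ * ∑' l, ‖c l‖ ^ p := by
  set r := decreasingRearrangement fun l => ‖c l‖
  have hr (k : ℕ) : 0 ≤ r k := decreasingRearrangement_nonneg _ k
  have hc2 := summable_norm_sq_of_summable_norm_rpow hp0 hp2.le hc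
  have hpow (x : ℝ) (hx : 0 ≤ x) : (x ^ 2) ^ (p / 2) = x ^ p := by
    rw [← Real.rpow_natCast, ← Real.rpow_mul hx]
    norm_num [mul_div_cancel₀]
  have hterm (n : ℕ) : ((n : ℝ) + 1) ^ (-(p / 2)) * bestNTermError 𝕜 ψ f (n + 1) ^ p
      ≤ B ^ (p / 2) * (((n : ℝ) + 1) ^ (-(p / 2)) * (∑' k, r (k + (n + 1)) ^ 2) ^ (p / 2)) := by
    rw [mul_left_comm, ← Real.mul_rpow hB0 (tsum_nonneg fun k => sq_nonneg _),
      ← hpow _ (bestNTermError_nonneg ψ f _)]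
    gcongr
    exact bestNTermError_sq_le_tsum_decreasingRearrangement hB0 hsum hB hf hc2 (n + 1)
  have hr2 := summable_comp_decreasingRearrangement (fun l => norm_nonneg (c l))
    (φ := fun x => x ^ 2) (by simp) (fun x _ => sq_nonneg x) hc2
  have hrp := summable_comp_decreasingRearrangement (fun l => norm_nonneg (c l))
    (φ := fun x => x ^ p) (Real.zero_rpow hp0.ne') (fun x hx => Real.rpow_nonneg hx p) hc
  have hanti : Antitone fun k => r k ^ 2 := fun i j h =>
    pow_le_pow_left₀ (hr j) (antitone_decreasingRearrangement _ h) 2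
  obtain ⟨hV, hHardy⟩ := Real.summable_and_tsum_rpow_mul_rpow_tsum_add_le
    (fun k => sq_nonneg (r k)) hanti hr2 (half_pos hp0) (by linarith)
    (by simpa [hpow _ (hr _)] using hrp)
  have hW (n : ℕ) : 0 ≤ ((n : ℝ) + 1) ^ (-(p / 2)) * bestNTermError 𝕜 ψ f (n + 1) ^ p := by
    have := bestNTermError_nonneg (𝕜 := 𝕜) ψ f (n + 1)
    positivity
  calc ∑' n : ℕ, ((n : ℝ) + 1) ^ (-(p / 2)) * bestNTermError 𝕜 ψ f (n + 1) ^ p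
      ≤ ∑' n : ℕ, B ^ (p / 2) *
          (((n : ℝ) + 1) ^ (-(p / 2)) * (∑' k, r (k + (n + 1)) ^ 2) ^ (p / 2)) :=
        ((hV.mul_left _).of_nonneg_of_le hW hterm).tsum_le_tsum hterm (hV.mul_left _)
    _ ≤ B ^ (p / 2) * ((1 - 2 ^ (p / 2 - 1))⁻¹ * ∑' k, (r k ^ 2) ^ (p / 2)) := by
        rw [tsum_mul_left]
        gcongr
    _ ≤ B ^ (p / 2) * (1 - 2 ^ (p / 2 - 1))⁻¹ * ∑' l, ‖c l‖ ^ p := by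
        simp only [hpow _ (hr _), mul_assoc]
        have := one_sub_two_rpow_pos (q := p / 2) (by linarith)
        gcongr
        exact tsum_comp_decreasingRearrangement_le (fun l => norm_nonneg (c l))
          (φ := fun x => x ^ p) (Real.zero_rpow hp0.ne') (fun x hx => Real.rpow_nonneg hx p) hc

end BestNTermApproximation

/-- Nonlinear approximation with frames: if `(ψ_λ)` is a frame with bounds `A ≤ B` in a
Hilbert space, `1 ≤ p < 2`, and `f = Σ c_λ ψ_λ` with `(c_λ) ∈ ℓ^p`, then
`(Σ_{n≥1} n^{-p/2} E_n(f)^p)^{1/p} ≤ C ‖(c_λ)‖_{ℓ^p}` with `C` depending only on `p`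
and the frame bounds; here `E_n(f)` is the best `n`-term approximation error. -/
theorem frame_nonlinear_approximation (p A B : ℝ) (hp1 : 1 ≤ p) (hp2 : p < 2)
    (hA : 0 < A) (hAB : A ≤ B) :
    ∃ C > 0, ∀ (ℋ : Type) (_ : NormedAddCommGroup ℋ) (_ : InnerProductSpace ℂ ℋ)
      (_ : CompleteSpace ℋ) (Λ : Type) (ψ : Λ → ℋ),
      (∀ g : ℋ, Summable fun l => ‖(inner ℂ g (ψ l) : ℂ)‖ ^ 2) →
      (∀ g : ℋ, A * ‖g‖ ^ 2 ≤ ∑' l, ‖(inner ℂ g (ψ l) : ℂ)‖ ^ 2) →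
      (∀ g : ℋ, ∑' l, ‖(inner ℂ g (ψ l) : ℂ)‖ ^ 2 ≤ B * ‖g‖ ^ 2) →
      ∀ (f : ℋ) (cf : Λ → ℂ),
        HasSum (fun l => cf l • ψ l) f →
        Summable (fun l => ‖cf l‖ ^ p) →
        (∑' n : ℕ, ((n : ℝ) + 1) ^ (-(p / 2)) *
            (sInf {e : ℝ | ∃ (F : Finset Λ) (dcoef : Λ → ℂ), F.card ≤ n + 1 ∧
              e = ‖f - ∑ l ∈ F, dcoef l • ψ l‖}) ^ p) ^ (1 / p)
          ≤ C * (∑' l, ‖cf l‖ ^ p) ^ (1 / p) := by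
  have hp0 : 0 < p := by linarith
  have hB0 : 0 < B := hA.trans_le hAB
  have hK : 0 < B ^ (p / 2) * (1 - 2 ^ (p / 2 - 1))⁻¹ := by
    have := one_sub_two_rpow_pos (q := p / 2) (by linarith)
    positivity
  refine ⟨_, Real.rpow_pos_of_pos hK (1 / p), fun ℋ _ _ _ Λ ψ hsum _ hB f c hf hc => ?_⟩
  rw [← Real.mul_rpow hK.le (tsum_nonneg fun l => by positivity)]
  gcongr
  · exact tsum_nonneg fun n => mul_nonneg (by positivity)
      (Real.rpow_nonneg (bestNTermError_nonneg (𝕜 := ℂ) ψ f (n + 1)) p)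
  · exact tsum_rpow_mul_bestNTermError_rpow_le hB0.le hp0 hp2 hsum hB hf hc
end
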